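/- arXiv:2204.04709 — 3 statements merged into one kernel-verified Lean document; each statement's English description precedes it below -/
import Mathlib

section
/- Let a,b,p ∈ ℝ, c not a nonpositive integer, θ ∈ [-1,1], and let u_n = Σ_{k=0}^{n} ((a)_k (b)_k)/(k!(c)_k)·θ^{n-k}(-p)_{n-k}/(n-k)! be the power series coefficients of (1-θx)^p F(a,b;c;x). Then for all n ≥ 2, (n+1)(n+c)·u_{n+1} = ξ_n·u_n - θ·η_n·u_{n-1} + θ²·λ_n·u_{n-2}, where ξ_n = (n+a)(n+b) + θ[2n² - 2n(p-c+1) - cp], η_n = 2n² + 2(a+b-p-2)n - (a+b-1)p + 2(a-1)(b-1) + θ(n-p-1)(n-p+c-2), and λ_n = (n+a-p-2)(n+b-p-2). -/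
open Polynomial

/-- Pochhammer symbol `(a)_n` for real `a`. -/
noncomputable def poch (a : ℝ) (n : ℕ) : ℝ := (ascPochhammer ℝ n).eval a

/-- Gaussian hypergeometric function `F(a,b;c;z)`. -/
noncomputable def hypF (a b c z : ℝ) : ℝ :=
  ∑' n : ℕ, poch a n * poch b n / poch c n * z ^ n / n.factorial

open Finset

/-!
The coefficients `f k` of `F(a,b;c;x)` and `g m` of `(1 - θx)^p` satisfy the first-order
recurrences `(k+1)(k+c) f(k+1) = (k+a)(k+b) f(k)` and `(m+1) g(m+1) = θ(m-p) g(m)`, and `u` is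
their Cauchy product. Each recurrence yields a linear relation between the weighted convolutions
`M_j(n) = ∑_k k^j f(k) g(n-k)` at consecutive `n`; taking these relations at three consecutive
indices, `M_1` and `M_2` can be eliminated, which leaves the three-term recurrence for `u = M_0`.
-/

lemma poch_succ (x : ℝ) (n : ℕ) : poch x (n + 1) = poch x n * (x + n) := by
  simp [poch, ascPochhammer_succ_right]

lemma poch_ne_zero {c : ℝ} (hc : ∀ n : ℕ, c ≠ -(n : ℝ)) (k : ℕ) : poch c k ≠ 0 := by
  induction k with
  | zero => simp [poch]
  | succ n ih =>
    rw [poch_succ]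
    exact mul_ne_zero ih fun h => hc n (by linarith)

noncomputable def hypFCoeff (a b c : ℝ) (k : ℕ) : ℝ :=
  poch a k * poch b k / (k.factorial * poch c k)

noncomputable def oneSubPowCoeff (p θ : ℝ) (m : ℕ) : ℝ :=
  θ ^ m * poch (-p) m / m.factorial

lemma hypFCoeff_succ (a b : ℝ) {c : ℝ} (hc : ∀ n : ℕ, c ≠ -(n : ℝ)) (k : ℕ) :
    ((k : ℝ) + 1) * ((k : ℝ) + c) * hypFCoeff a b c (k + 1)
      = ((k : ℝ) + a) * ((k : ℝ) + b) * hypFCoeff a b c k := by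
  have hpoch : poch c k ≠ 0 := poch_ne_zero hc k
  have hck : c + (k : ℝ) ≠ 0 := fun h => hc k (by linarith)
  have hfact : (k.factorial : ℝ) ≠ 0 := Nat.cast_ne_zero.mpr k.factorial_ne_zero
  rw [hypFCoeff, hypFCoeff, poch_succ, poch_succ, poch_succ, Nat.factorial_succ]
  push_cast
  field_simp
  ring

lemma oneSubPowCoeff_succ (p θ : ℝ) (m : ℕ) :
    ((m : ℝ) + 1) * oneSubPowCoeff p θ (m + 1) = θ * ((m : ℝ) - p) * oneSubPowCoeff p θ m := by
  have hfact : (m.factorial : ℝ) ≠ 0 := Nat.cast_ne_zero.mpr m.factorial_ne_zero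
  rw [oneSubPowCoeff, oneSubPowCoeff, poch_succ, Nat.factorial_succ, pow_succ]
  push_cast
  field_simp
  ring

noncomputable def moment (f g : ℕ → ℝ) (j n : ℕ) : ℝ :=
  ∑ k ∈ range (n + 1), (k : ℝ) ^ j * f k * g (n - k)

lemma moment_zero (f g : ℕ → ℝ) (n : ℕ) :
    moment f g 0 n = ∑ k ∈ range (n + 1), f k * g (n - k) := by
  simp [moment]

section Convolution

variable {f g : ℕ → ℝ} {a b c p θ : ℝ}

lemma moment_succ_of_rec_right (hg : ∀ m : ℕ, ((m : ℝ) + 1) * g (m + 1) = θ * ((m : ℝ) - p) * g m)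
    (j N : ℕ) :
    ((N : ℝ) + 1) * moment f g j (N + 1) - moment f g (j + 1) (N + 1)
      = θ * ((N : ℝ) - p) * moment f g j N - θ * moment f g (j + 1) N := by
  have hterm : ∀ k ∈ range (N + 1),
      ((N : ℝ) + 1 - k) * ((k : ℝ) ^ j * f k) * g (N + 1 - k)
        = θ * ((N : ℝ) - p - k) * ((k : ℝ) ^ j * f k) * g (N - k) := by
    intro k hk
    have hkN : k ≤ N := Nat.lt_succ_iff.mp (mem_range.mp hk)
    have hg' := hg (N - k)
    rw [Nat.cast_sub hkN] at hg'
    rw [show N + 1 - k = N - k + 1 by omega]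
    linear_combination (k : ℝ) ^ j * f k * hg'
  calc ((N : ℝ) + 1) * moment f g j (N + 1) - moment f g (j + 1) (N + 1)
      = ∑ k ∈ range (N + 1 + 1), ((N : ℝ) + 1 - k) * ((k : ℝ) ^ j * f k) * g (N + 1 - k) := by
        simp only [moment, mul_sum, ← sum_sub_distrib]
        exact sum_congr rfl fun k _ => by ring
    _ = ∑ k ∈ range (N + 1), θ * ((N : ℝ) - p - k) * ((k : ℝ) ^ j * f k) * g (N - k) := by
        rw [sum_range_succ, ← sum_congr rfl hterm]
        simp
    _ = θ * ((N : ℝ) - p) * moment f g j N - θ * moment f g (j + 1) N := by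
        simp only [moment, mul_sum, ← sum_sub_distrib]
        exact sum_congr rfl fun k _ => by ring

lemma moment_succ_of_rec_left
    (hf : ∀ k : ℕ, ((k : ℝ) + 1) * ((k : ℝ) + c) * f (k + 1) = ((k : ℝ) + a) * ((k : ℝ) + b) * f k)
    (N : ℕ) :
    moment f g 2 (N + 1) + (c - 1) * moment f g 1 (N + 1)
      = moment f g 2 N + (a + b) * moment f g 1 N + a * b * moment f g 0 N := by
  calc moment f g 2 (N + 1) + (c - 1) * moment f g 1 (N + 1)
      = ∑ k ∈ range (N + 1 + 1), (k : ℝ) * ((k : ℝ) - 1 + c) * f k * g (N + 1 - k) := by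
        simp only [moment, mul_sum, ← sum_add_distrib]
        exact sum_congr rfl fun k _ => by ring
    _ = ∑ k ∈ range (N + 1), ((k : ℝ) + 1) * ((k : ℝ) + c) * f (k + 1) * g (N - k) := by
        rw [sum_range_succ']
        simp only [Nat.cast_add, Nat.cast_one, Nat.cast_zero, zero_mul, add_zero,
          Nat.add_sub_add_right]
        exact sum_congr rfl fun k _ => by ring
    _ = moment f g 2 N + (a + b) * moment f g 1 N + a * b * moment f g 0 N := by
        simp only [moment, hf, mul_sum, ← sum_add_distrib]
        exact sum_congr rfl fun k _ => by ring

lemma moment_zero_recurrence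
    (hf : ∀ k : ℕ, ((k : ℝ) + 1) * ((k : ℝ) + c) * f (k + 1) = ((k : ℝ) + a) * ((k : ℝ) + b) * f k)
    (hg : ∀ m : ℕ, ((m : ℝ) + 1) * g (m + 1) = θ * ((m : ℝ) - p) * g m)
    (n : ℕ) (hn : 2 ≤ n) :
    ((n : ℝ) + 1) * ((n : ℝ) + c) * moment f g 0 (n + 1) =
      (((n : ℝ) + a) * ((n : ℝ) + b)
          + θ * (2 * (n : ℝ) ^ 2 - 2 * (n : ℝ) * (p - c + 1) - c * p)) * moment f g 0 n
      - θ * (2 * (n : ℝ) ^ 2 + 2 * (a + b - p - 2) * (n : ℝ) - (a + b - 1) * p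
          + 2 * (a - 1) * (b - 1)
          + θ * ((n : ℝ) - p - 1) * ((n : ℝ) - p + c - 2)) * moment f g 0 (n - 1)
      + θ ^ 2 * (((n : ℝ) + a - p - 2) * ((n : ℝ) + b - p - 2)) * moment f g 0 (n - 2) := by
  obtain ⟨m, rfl⟩ : ∃ m, n = m + 2 := ⟨n - 2, by omega⟩
  have F0 := moment_succ_of_rec_right (f := f) hg 0 (m + 2)
  have F1 := moment_succ_of_rec_right (f := f) hg 1 (m + 2)
  have F2 := moment_succ_of_rec_left (g := g) hf (m + 2)
  have G0 := moment_succ_of_rec_right (f := f) hg 0 (m + 1)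
  have G1 := moment_succ_of_rec_right (f := f) hg 1 (m + 1)
  have G2 := moment_succ_of_rec_left (g := g) hf (m + 1)
  have H0 := moment_succ_of_rec_right (f := f) hg 0 m
  have H1 := moment_succ_of_rec_right (f := f) hg 1 m
  have H2 := moment_succ_of_rec_left (g := g) hf m
  simp only [Nat.add_sub_cancel, Nat.reduceAdd] at G0 G1 G2 ⊢
  push_cast at F0 F1 F2 G0 G1 G2 H0 H1 H2 ⊢
  linear_combination ((m : ℝ) + 2 + c) * F0 + F1 + F2
    - ((m : ℝ) + 2 + a + b + θ * ((m : ℝ) + c - p)) * G0 - (1 + θ) * G1 - 2 * θ * G2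
    + θ * ((m : ℝ) + a + b - p) * H0 + θ * H1 + θ ^ 2 * H2

end Convolution

theorem u_recurrence_three_term_general (a b c p θ : ℝ) (hc : ∀ n : ℕ, c ≠ -(n : ℝ))
    (u : ℕ → ℝ)
    (hu : ∀ n, u n = ∑ k ∈ Finset.range (n + 1),
      poch a k * poch b k / (k.factorial * poch c k) *
        (θ ^ (n - k) * poch (-p) (n - k) / (n - k).factorial)) :
    ∀ n : ℕ, 2 ≤ n →
      ((n : ℝ) + 1) * ((n : ℝ) + c) * u (n + 1) =
        (((n : ℝ) + a) * ((n : ℝ) + b)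
            + θ * (2 * (n : ℝ) ^ 2 - 2 * (n : ℝ) * (p - c + 1) - c * p)) * u n
        - θ * (2 * (n : ℝ) ^ 2 + 2 * (a + b - p - 2) * (n : ℝ) - (a + b - 1) * p
            + 2 * (a - 1) * (b - 1)
            + θ * ((n : ℝ) - p - 1) * ((n : ℝ) - p + c - 2)) * u (n - 1)
        + θ ^ 2 * (((n : ℝ) + a - p - 2) * ((n : ℝ) + b - p - 2)) * u (n - 2) := by
  have hu_moment : u = moment (hypFCoeff a b c) (oneSubPowCoeff p θ) 0 :=
    funext fun n => by rw [hu, moment_zero]; rfl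
  subst hu_moment
  exact moment_zero_recurrence (hypFCoeff_succ a b hc) (oneSubPowCoeff_succ p θ)

theorem u_recurrence_three_term (a b c p θ : ℝ) (hc : ∀ n : ℕ, c ≠ -(n : ℝ))
    (hθ : θ ∈ Set.Icc (-1 : ℝ) 1)
    (u : ℕ → ℝ)
    (hu : ∀ n, u n = ∑ k ∈ Finset.range (n + 1),
      poch a k * poch b k / (k.factorial * poch c k) *
        (θ ^ (n - k) * poch (-p) (n - k) / (n - k).factorial)) :
    ∀ n : ℕ, 2 ≤ n →
      ((n : ℝ) + 1) * ((n : ℝ) + c) * u (n + 1) =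
        (((n : ℝ) + a) * ((n : ℝ) + b)
            + θ * (2 * (n : ℝ) ^ 2 - 2 * (n : ℝ) * (p - c + 1) - c * p)) * u n
        - θ * (2 * (n : ℝ) ^ 2 + 2 * (a + b - p - 2) * (n : ℝ) - (a + b - 1) * p
            + 2 * (a - 1) * (b - 1)
            + θ * ((n : ℝ) - p - 1) * ((n : ℝ) - p + c - 2)) * u (n - 1)
        + θ ^ 2 * (((n : ℝ) + a - p - 2) * ((n : ℝ) + b - p - 2)) * u (n - 2) :=
  u_recurrence_three_term_general a b c p θ hc u hu
end

section
/- Let p ∈ ℝ and define b_n by (1-r²)^{p/2} E(r) = (π/2) Σ_{n≥0} b_n r^{2n}, where E is the complete elliptic integral of the second kind. Then b_0 = 1, b_1 = -p/2 - 1/4, and for n ≥ 1, b_{n+1} = (1/4)·[(8n² - 4pn - 2p - 1)/(n+1)²]·b_n - (1/4)·[(2n-p-1)(2n-p-3)/(n+1)²]·b_{n-1}. -/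
/-!
Write `x = r²` and `q = p / 2`. By the binomial theorem `(1 - x)^q = ₂F₁(-q, 1; 1; x)`, so
`(1 - x)^q E(r) / (π/2)` is the product `U V` of two hypergeometric series, and by the identity
theorem for power series `b` is the coefficient sequence of `U V`. The Euler operator
`θ = X d/dX` multiplies the coefficient of `Xⁿ` by `n`, and the recurrences of the hypergeometric
coefficients say `θ U = X (θ - q) U` and `4 θ² V = X (4 θ² - 1) V`. Eliminating `U` and `V` from
these gives a second-order `θ`-equation for `U V`; its coefficient of `Xⁿ⁺¹` is the three-term
recurrence.
-/

open Polynomial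

/-- Complete elliptic integral of the second kind, `E(r) = (π/2) F(-1/2,1/2;1;r²)`. -/
noncomputable def ellE (r : ℝ) : ℝ := (Real.pi / 2) * hypF (-(1/2)) (1/2) 1 (r ^ 2)

open PowerSeries FormalMultilinearSeries Filter Topology Finset

namespace PowerSeries

variable {R : Type*} [CommRing R]

variable (R) in
noncomputable def eulerDeriv : Derivation R R⟦X⟧ R⟦X⟧ :=
  (X : R⟦X⟧) • derivative R

local notation "θ" => eulerDeriv _

theorem eulerDeriv_apply (f : R⟦X⟧) : θ f = X * derivative R f := rfl

@[simp]
theorem coeff_eulerDeriv (f : R⟦X⟧) (n : ℕ) : coeff n (θ f) = n * coeff n f := by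
  rcases n with _ | n
  · simp [eulerDeriv_apply]
  · rw [eulerDeriv_apply, coeff_succ_X_mul, coeff_derivative]
    push_cast
    ring

theorem eulerDeriv_X : θ (X : R⟦X⟧) = X := by
  simp [eulerDeriv_apply]

theorem eulerDeriv_mk_eq_of_succ_mul {u : ℕ → R} {q : R}
    (hu : ∀ n : ℕ, (n + 1) * u (n + 1) = (n - q) * u n) :
    θ (mk u) = X * (θ (mk u) - C q * mk u) := by
  ext (_ | n)
  · simp
  · rw [coeff_succ_X_mul]
    simp [hu]
    ring

theorem eulerDeriv_sq_mk_eq_of_succ_mul {v : ℕ → R}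
    (hv : ∀ n : ℕ, 4 * (n + 1) ^ 2 * v (n + 1) = (4 * n ^ 2 - 1) * v n) :
    4 * θ (θ (mk v)) = X * (4 * θ (θ (mk v)) - mk v) := by
  ext (_ | n)
  · simp [← map_ofNat C, coeff_C_mul]
  · rw [coeff_succ_X_mul]
    simp [← map_ofNat C, coeff_C_mul]
    linear_combination hv n

theorem eulerDeriv_ode_mul {U V : R⟦X⟧} {q : R}
    (hU : θ U = X * (θ U - C q * U)) (hV : 4 * θ (θ V) = X * (4 * θ (θ V) - V)) :
    4 * (1 - X) ^ 2 * θ (θ (U * V)) + 8 * C q * X * (1 - X) * θ (U * V)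
      + X * (C (4 * q + 1) + C (4 * q ^ 2 - 1) * X) * (U * V) = 0 := by
  have hθU : θ (θ U) = X * (θ U - C q * U) + X * (θ (θ U) - C q * θ U) := by
    conv_lhs => rw [hU]
    simp only [Derivation.leibniz, map_sub, eulerDeriv_X, smul_eq_mul,
      show θ (C q : R⟦X⟧) = 0 by simp [eulerDeriv_apply]]
    ring
  have hθW : θ (U * V) = U * θ V + V * θ U := by simp [Derivation.leibniz]
  have hθθW : θ (θ (U * V)) = U * θ (θ V) + 2 * θ U * θ V + V * θ (θ U) := by
    rw [hθW]
    simp only [map_add, Derivation.leibniz, smul_eq_mul]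
    ring
  rw [hθθW, hθW]
  simp only [map_add, map_mul, map_sub, map_pow, map_ofNat, map_one]
  linear_combination (1 - X) * U * hV + 8 * (1 - X) * θ V * hU + 4 * (1 - X) * V * hθU
    + 4 * X * (1 + C q) * V * hU

theorem coeff_succ_succ_of_eulerDeriv_ode {W : R⟦X⟧} {q : R}
    (hW : 4 * (1 - X) ^ 2 * θ (θ W) + 8 * C q * X * (1 - X) * θ W
      + X * (C (4 * q + 1) + C (4 * q ^ 2 - 1) * X) * W = 0) (m : ℕ) :
    4 * (m + 2) ^ 2 * coeff (m + 2) W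
      = (8 * (m + 1) ^ 2 - 8 * q * (m + 1) - 4 * q - 1) * coeff (m + 1) W
        - (4 * m ^ 2 - 8 * q * m + 4 * q ^ 2 - 1) * coeff m W := by
  have hW' : (4 : R) • θ (θ W) + X * ((-8 : R) • θ (θ W) + (8 * q) • θ W + (4 * q + 1) • W)
      + X * (X * ((4 : R) • θ (θ W) + (-8 * q) • θ W + (4 * q ^ 2 - 1) • W)) = 0 := by
    simp only [smul_eq_C_mul, map_add, map_mul, map_sub, map_neg, map_pow, map_ofNat,
      map_one] at hW ⊢
    linear_combination hW
  have h := congrArg (coeff (m + 2)) hW'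
  simp only [map_add, coeff_succ_X_mul, coeff_smul, coeff_eulerDeriv, smul_eq_mul,
    map_zero] at h
  push_cast at h
  linear_combination h

theorem coeff_mk_mul_mk_recurrence {u v : ℕ → R} {q : R}
    (hu : ∀ n : ℕ, (n + 1) * u (n + 1) = (n - q) * u n)
    (hv : ∀ n : ℕ, 4 * (n + 1) ^ 2 * v (n + 1) = (4 * n ^ 2 - 1) * v n) (m : ℕ) :
    4 * (m + 2) ^ 2 * coeff (m + 2) (mk u * mk v)
      = (8 * (m + 1) ^ 2 - 8 * q * (m + 1) - 4 * q - 1) * coeff (m + 1) (mk u * mk v)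
        - (4 * m ^ 2 - 8 * q * m + 4 * q ^ 2 - 1) * coeff m (mk u * mk v) :=
  coeff_succ_succ_of_eulerDeriv_ode
    (eulerDeriv_ode_mul (eulerDeriv_mk_eq_of_succ_mul hu) (eulerDeriv_sq_mk_eq_of_succ_mul hv)) m

end PowerSeries

theorem hypF_eq_ordinaryHypergeometric (a b c z : ℝ) : hypF a b c z = ₂F₁ a b c z := by
  rw [ordinaryHypergeometric_eq_tsum]
  exact tsum_congr fun n => by simp only [poch, smul_eq_mul]; ring

theorem ordinaryHypergeometricCoefficient_succ {𝕂 : Type*} [Field 𝕂] [CharZero 𝕂] (a b c : 𝕂)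
    {n : ℕ} (hc : c + n ≠ 0) :
    (n + 1) * (c + n) * ordinaryHypergeometricCoefficient a b c (n + 1)
      = (a + n) * (b + n) * ordinaryHypergeometricCoefficient a b c n := by
  simp only [ordinaryHypergeometricCoefficient, ascPochhammer_succ_eval, Nat.factorial_succ,
    Nat.cast_mul, mul_inv, Nat.cast_succ]
  field_simp

theorem hasSum_coeff_mk_mul_mk {𝕜 : Type*} [NontriviallyNormedField 𝕜] [CompleteSpace 𝕜]
    {u v : ℕ → 𝕜} {x : 𝕜} (hu : ‖x‖ₑ < (ofScalars 𝕜 u).radius)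
    (hv : ‖x‖ₑ < (ofScalars 𝕜 v).radius) :
    HasSum (fun n => PowerSeries.coeff n (PowerSeries.mk u * PowerSeries.mk v) * x ^ n)
      (ofScalarsSum u x * ofScalarsSum v x) := by
  have hsu := (ofScalars 𝕜 u).summable_norm_apply (Metric.mem_eball.2 (by simpa using hu))
  have hsv := (ofScalars 𝕜 v).summable_norm_apply (Metric.mem_eball.2 (by simpa using hv))
  simp only [ofScalars_apply_eq, smul_eq_mul] at hsu hsv
  simp only [ofScalars_sum_eq, smul_eq_mul]
  have h := (summable_norm_sum_mul_antidiagonal_of_summable_norm hsu hsv).of_norm.hasSum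
  rw [← tsum_mul_tsum_eq_tsum_sum_antidiagonal_of_summable_norm hsu hsv] at h
  have e : ∀ n, ∑ kl ∈ antidiagonal n, u kl.1 * x ^ kl.1 * (v kl.2 * x ^ kl.2)
      = PowerSeries.coeff n (PowerSeries.mk u * PowerSeries.mk v) * x ^ n := fun n => by
    rw [PowerSeries.coeff_mul, sum_mul]
    refine sum_congr rfl fun kl hkl => ?_
    rw [← mem_antidiagonal.1 hkl, pow_add, PowerSeries.coeff_mk, PowerSeries.coeff_mk]
    ring
  simpa only [e] using h

theorem le_radius_ofScalars_of_summable {𝕜 : Type*} [NontriviallyNormedField 𝕜] {c : ℕ → 𝕜}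
    {x : 𝕜} (h : Summable fun n => c n * x ^ n) : (‖x‖₊ : ENNReal) ≤ (ofScalars 𝕜 c).radius :=
  (ofScalars 𝕜 c).le_radius_of_tendsto (l := 0) <| by
    simpa only [ofScalars_norm, norm_mul, norm_pow, coe_nnnorm, norm_zero]
      using h.tendsto_atTop_zero.norm

theorem eq_of_eventually_tsum_mul_pow_eq {b c : ℕ → ℝ} (hc : 0 < (ofScalars ℝ c).radius)
    (hc0 : c 0 ≠ 0) (h : ∀ᶠ x in 𝓝[>] 0, ∑' n, b n * x ^ n = ∑' n, c n * x ^ n) : b = c := by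
  simp only [← smul_eq_mul (a := b _), ← smul_eq_mul (a := c _), ← ofScalars_sum_eq] at h
  have hfc := (ofScalars ℝ c).hasFPowerSeriesOnBall hc
  have hne : ∀ᶠ x in 𝓝 (0 : ℝ), ofScalarsSum c x ≠ 0 :=
    hfc.analyticAt.continuousAt.eventually_ne (by simpa using hc0 : ofScalarsSum c (0 : ℝ) ≠ 0)
  obtain ⟨x, ⟨hbc, hcx⟩, hx⟩ :=
    ((h.and (nhdsWithin_le_nhds hne)).and self_mem_nhdsWithin).exists
  -- A non-summable `∑'` is `0`, so the equation at `x` forces summability there.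
  have hsum : Summable fun n => b n * x ^ n := by
    by_contra hns
    rw [ofScalars_sum_eq] at hbc
    simp only [smul_eq_mul, tsum_eq_zero_of_not_summable hns] at hbc
    exact hcx hbc.symm
  have hb : 0 < (ofScalars ℝ b).radius :=
    lt_of_lt_of_le (by simpa using hx.ne') (le_radius_ofScalars_of_summable hsum)
  have hfb := (ofScalars ℝ b).hasFPowerSeriesOnBall hb
  have hfreq : ∃ᶠ x in 𝓝[≠] (0 : ℝ), ofScalarsSum b x = ofScalarsSum c x :=
    h.frequently.filter_mono (nhdsGT_le_nhdsNE 0)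
  refine (ofScalars_series_eq_iff ℝ b c).1 ?_
  exact hfb.hasFPowerSeriesAt.eq_formalMultilinearSeries_of_eventually hfc.hasFPowerSeriesAt
    ((hfb.analyticAt.frequently_eq_iff_eventually_eq hfc.analyticAt).1 hfreq)

theorem one_sub_rpow_hasFPowerSeriesOnBall_zero (q : ℝ) :
    HasFPowerSeriesOnBall (fun x : ℝ => (1 - x) ^ q)
      (ordinaryHypergeometricSeries ℝ (-q) 1 1) 0 1 := by
  set N := -ContinuousLinearMap.id ℝ ℝ
  have h := ((map_zero N).symm ▸ Real.one_add_rpow_hasFPowerSeriesOnBall_zero (a := q)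
    : HasFPowerSeriesOnBall _ _ (N 0) 1).compContinuousLinearMap
  rw [binomialSeries_eq_ordinaryHypergeometricSeries (b := (1 : ℝ)) (fun k => by
    rw [ne_eq, eq_neg_iff_add_eq_zero]; positivity), compContinuousLinearMap_comp] at h
  convert h using 1
  · ext x; simp [N, sub_eq_add_neg]
  · ext n; simp [N]
  · simp [N, ← ofReal_norm, ContinuousLinearMap.norm_id]

noncomputable def ellEExpansionCoeff (q : ℝ) (n : ℕ) : ℝ :=
  PowerSeries.coeff n (PowerSeries.mk (ordinaryHypergeometricCoefficient (-q) 1 1) *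
    PowerSeries.mk (ordinaryHypergeometricCoefficient (-(1 / 2)) (1 / 2) 1))

theorem hasSum_ellEExpansionCoeff (q : ℝ) {x : ℝ} (hx : |x| < 1) :
    HasSum (fun n => ellEExpansionCoeff q n * x ^ n)
      ((1 - x) ^ q * hypF (-(1 / 2)) (1 / 2) 1 x) := by
  have hU := one_sub_rpow_hasFPowerSeriesOnBall_zero q
  have hx' : ‖x‖ₑ < 1 := by simpa [enorm_eq_nnnorm, ← NNReal.coe_lt_one] using hx
  have hrV : (ordinaryHypergeometricSeries ℝ (-(1 / 2) : ℝ) (1 / 2) 1).radius = 1 :=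
    ordinaryHypergeometricSeries_radius_eq_one ℝ _ _ _ fun k => by
      have hk := k.cast_nonneg (α := ℝ)
      refine ⟨fun h => ?_, fun h => by linarith, fun h => by linarith⟩
      field_simp at h
      norm_cast at h
      omega
  have hUx : (1 - x) ^ q = (ordinaryHypergeometricSeries ℝ (-q) 1 1).sum x := by
    simpa using hU.sum (y := x) (by simpa using hx')
  rw [hUx, hypF_eq_ordinaryHypergeometric]
  exact hasSum_coeff_mk_mul_mk (hx'.trans_le hU.r_le) (hrV ▸ hx')

theorem ellEExpansionCoeff_zero (q : ℝ) : ellEExpansionCoeff q 0 = 1 := by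
  simp [ellEExpansionCoeff, ordinaryHypergeometricCoefficient]

theorem ellEExpansionCoeff_one (q : ℝ) : ellEExpansionCoeff q 1 = -q - 1 / 4 := by
  simp [ellEExpansionCoeff, PowerSeries.coeff_mul, Finset.Nat.antidiagonal_succ,
    ordinaryHypergeometricCoefficient]
  ring

theorem ellEExpansionCoeff_recurrence (q : ℝ) (m : ℕ) :
    4 * (m + 2) ^ 2 * ellEExpansionCoeff q (m + 2)
      = (8 * (m + 1) ^ 2 - 8 * q * (m + 1) - 4 * q - 1) * ellEExpansionCoeff q (m + 1)
        - (4 * m ^ 2 - 8 * q * m + 4 * q ^ 2 - 1) * ellEExpansionCoeff q m := by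
  refine coeff_mk_mul_mk_recurrence (fun n => ?_) (fun n => ?_) m
  · have h := ordinaryHypergeometricCoefficient_succ (-q) 1 1 (n := n) (by positivity)
    refine mul_left_cancel₀ (by positivity : (1 + n : ℝ) ≠ 0) ?_
    linear_combination h
  · have h := ordinaryHypergeometricCoefficient_succ (-(1 / 2) : ℝ) (1 / 2) 1 (n := n)
      (by positivity)
    linear_combination 4 * h

theorem ellE_expansion_recurrence (p : ℝ) (b : ℕ → ℝ)
    (hb : ∀ r : ℝ, |r| < 1 →
      (1 - r ^ 2) ^ (p / 2) * ellE r = (Real.pi / 2) * ∑' n : ℕ, b n * r ^ (2 * n)) :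
    b 0 = 1 ∧ b 1 = -p / 2 - 1 / 4 ∧
      ∀ n : ℕ, 1 ≤ n →
        b (n + 1) = (1 / 4) * ((8 * (n : ℝ) ^ 2 - 4 * p * (n : ℝ) - 2 * p - 1)
              / ((n : ℝ) + 1) ^ 2) * b n
          - (1 / 4) * ((2 * (n : ℝ) - p - 1) * (2 * (n : ℝ) - p - 3)
              / ((n : ℝ) + 1) ^ 2) * b (n - 1) := by
  have hseries : ∀ x ∈ Set.Ioo (0 : ℝ) 1,
      ∑' n, b n * x ^ n = ∑' n, ellEExpansionCoeff (p / 2) n * x ^ n := by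
    rintro x ⟨hx0, hx1⟩
    have hr : |√x| < 1 := by
      rw [abs_of_nonneg (Real.sqrt_nonneg x), ← Real.sqrt_one]
      exact Real.sqrt_lt_sqrt hx0.le hx1
    have h := hb √x hr
    simp only [ellE, pow_mul, Real.sq_sqrt hx0.le] at h
    rw [(hasSum_ellEExpansionCoeff (p / 2) (abs_lt.2 ⟨by linarith, hx1⟩)).tsum_eq]
    refine mul_left_cancel₀ (by positivity : Real.pi / 2 ≠ 0) ?_
    linear_combination -h
  obtain rfl : b = ellEExpansionCoeff (p / 2) := by
    refine eq_of_eventually_tsum_mul_pow_eq ?_ (by simp [ellEExpansionCoeff_zero]) ?_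
    · exact lt_of_lt_of_le (by norm_num) (le_radius_ofScalars_of_summable
        (hasSum_ellEExpansionCoeff (p / 2) (x := 1 / 2) (by norm_num [abs_of_pos])).summable)
    · filter_upwards [Ioo_mem_nhdsGT one_pos] using hseries
  refine ⟨ellEExpansionCoeff_zero _, by rw [ellEExpansionCoeff_one]; ring, fun n hn => ?_⟩
  obtain ⟨m, rfl⟩ := Nat.exists_eq_add_of_le' hn
  have h := ellEExpansionCoeff_recurrence (p / 2) m
  simp only [Nat.add_sub_cancel]
  push_cast at h ⊢
  field_simp
  linear_combination h
end

section
/- Let 0 < a and a + b < 1 with b > 0 (so 0 < a < a+b < 1). If a+b > 1/2, then Γ(a+b)/Γ(a+2b) < Γ(1-a-b)/Γ(1-a); if a+b < 1/2, the reverse inequality holds. -/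
/-!
The functional equation `log Γ x = log Γ (x + 1) - log x` exhibits `log Γ` as a convex function
(Bohr–Mollerup) plus the strictly convex `-log`, so `log Γ` is strictly convex on `(0, ∞)`.
Hence its increments `log Γ (x + b) - log Γ x` strictly increase with `x`, i.e. `Γ x / Γ (x + b)`
strictly decreases. The two ratios of the theorem are its values at `a + b` and `1 - a - b`,
which compare as `a + b` compares with `1 / 2`.
-/

open Set Real

theorem StrictConvexOn.sub_lt_sub_of_lt {𝕜 : Type*} [Field 𝕜] [LinearOrder 𝕜]
    [IsStrictOrderedRing 𝕜] {s : Set 𝕜} {f : 𝕜 → 𝕜} (hf : StrictConvexOn 𝕜 s f) {x y d : 𝕜}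
    (hx : x ∈ s) (hyd : y + d ∈ s) (hxy : x < y) (hd : 0 < d) :
    f (x + d) - f x < f (y + d) - f y := by
  have hxd : x + d ∈ s := hf.1.ordConnected.out hx hyd ⟨by linarith, by linarith⟩
  have hy : y ∈ s := hf.1.ordConnected.out hx hyd ⟨hxy.le, by linarith⟩
  have h₁ := hf.secant_strict_mono hx hxd hyd (by linarith) (by linarith) (by linarith)
  have h₂ := hf.secant_strict_mono hyd hx hy (by linarith) (by linarith) hxy
  rw [add_sub_cancel_left] at h₁
  rw [← neg_div_neg_eq (f x - _), ← neg_div_neg_eq (f y - _)] at h₂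
  simp only [neg_sub, add_sub_cancel_left] at h₂
  exact (div_lt_div_iff_of_pos_right hd).1 (h₁.trans h₂)

theorem Real.strictConvexOn_log_Gamma : StrictConvexOn ℝ (Ioi 0) (log ∘ Gamma) := by
  have hshift : ConvexOn ℝ (Ioi 0) fun x => log (Gamma (x + 1)) := by
    refine ((convexOn_log_Gamma.translate_right 1).subset ?_ (convex_Ioi 0)).congr ?_
    · intro x hx
      simp only [mem_preimage, mem_Ioi] at hx ⊢
      linarith
    · intro x _
      simp [add_comm]
  refine (hshift.sub_strictConcaveOn strictConcaveOn_log_Ioi).congr fun x hx => ?_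
  have hx : 0 < x := hx
  simp [Gamma_add_one hx.ne', log_mul hx.ne' (Gamma_pos_of_pos hx).ne']

theorem Real.Gamma_div_Gamma_add_strictAntiOn {d : ℝ} (hd : 0 < d) :
    StrictAntiOn (fun x => Gamma x / Gamma (x + d)) (Ioi 0) := by
  intro x (hx : 0 < x) y (hy : 0 < y) hxy
  have hinc := strictConvexOn_log_Gamma.sub_lt_sub_of_lt hx (show 0 < y + d by linarith) hxy hd
  simp only [Function.comp_apply] at hinc
  have hpos : ∀ {t}, 0 < t → 0 < Gamma t := Gamma_pos_of_pos
  rw [← log_lt_log_iff (div_pos (hpos hy) (hpos (by linarith)))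
    (div_pos (hpos hx) (hpos (by linarith))), log_div, log_div]
  · linarith
  all_goals positivity

theorem gamma_ratio_inequality (a b : ℝ) (ha : 0 < a) (hb : 0 < b) (hab : a + b < 1) :
    (a + b > 1/2 →
      Real.Gamma (a + b) / Real.Gamma (a + 2 * b)
        < Real.Gamma (1 - a - b) / Real.Gamma (1 - a)) ∧
    (a + b < 1/2 →
      Real.Gamma (a + b) / Real.Gamma (a + 2 * b)
        > Real.Gamma (1 - a - b) / Real.Gamma (1 - a)) := by
  have hanti := Gamma_div_Gamma_add_strictAntiOn hb
  have hs : a + b ∈ Ioi (0 : ℝ) := show 0 < a + b by linarith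
  have ht : 1 - a - b ∈ Ioi (0 : ℝ) := show 0 < 1 - a - b by linarith
  rw [show a + 2 * b = a + b + b by ring, show Gamma (1 - a) = Gamma (1 - a - b + b) by ring_nf]
  exact ⟨fun h => hanti ht hs (by linarith), fun h => hanti hs ht (by linarith)⟩
end
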